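/- arXiv:2002.00330 — 5 statements merged into one kernel-verified Lean document; each statement's English description precedes it below -/
import Mathlib

section
/- Let K be a field of characteristic zero and let D = ∂_x + Σⱼ₌₁ʳ (a(x)yⱼ + bⱼ(x)) ∂_{yⱼ} be a derivation of R = K[x, y₁, …, y_r] with a, bⱼ ∈ K[x]. If ρ is a K-algebra automorphism of R commuting with D, then ρ(x) ∈ K[x], i.e., ρ(x) contains no variables yⱼ, provided a(x) ≠ 0. -/
/-!
Applying `ρ` to `D x = 1` gives `D (ρ x) = 1`, so it suffices that every solution `q` of `D q = 1`
lies in `K[x]`. Grade `K[x, y]` by degree in the `yⱼ`. By Euler's identity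
`D = ∂ₓ + a · Σⱼ yⱼ ∂_{yⱼ} + Σⱼ bⱼ ∂_{yⱼ}` acts on a component of `y`-degree `n` as `∂ₓ + n a`
plus a term of `y`-degree `n - 1`. If `q` had `y`-degree `d ≥ 1`, its top component `f` would
satisfy `∂ₓ f = -d a f`; this is impossible for `f ≠ 0`, as `∂ₓ` lowers the `x`-degree while
multiplication by `a ≠ 0` does not.
-/

open MvPolynomial
open scoped Polynomial

theorem Derivation.finset_sum_apply {R A M α : Type*} [CommSemiring R] [CommSemiring A]
    [Algebra R A] [AddCommMonoid M] [Module A M] [Module R M] (s : Finset α)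
    (D : α → Derivation R A M) (x : A) : (∑ i ∈ s, D i) x = ∑ i ∈ s, D i x := by
  simp only [← Derivation.coeFnAddMonoidHom_apply, map_sum, Finset.sum_apply]

namespace MvPolynomial

variable {σ R : Type*} [CommSemiring R]

theorem IsWeightedHomogeneous.pderiv_tsub {w : σ → ℕ} {φ : MvPolynomial σ R} {n : ℕ}
    (h : φ.IsWeightedHomogeneous w n) (i : σ) :
    (pderiv i φ).IsWeightedHomogeneous w (n - w i) := by
  intro m hm
  rw [coeff_pderiv] at hm
  have := h (left_ne_zero_of_mul hm)
  rw [map_add, Finsupp.weight_single, one_smul] at this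
  omega

theorem degreeOf_pderiv_lt {i : σ} {f : MvPolynomial σ R} (h : pderiv i f ≠ 0) :
    degreeOf i (pderiv i f) < degreeOf i f := by
  have succ_le : ∀ m ∈ (pderiv i f).support, m i + 1 ≤ degreeOf i f := fun m hm ↦ by
    rw [mem_support_iff, coeff_pderiv] at hm
    simpa using monomial_le_degreeOf i (mem_support_iff.mpr (left_ne_zero_of_mul hm))
  obtain ⟨m, hm⟩ := support_nonempty.mpr h
  rw [degreeOf_lt_iff (by have := succ_le m hm; omega)]
  exact fun m hm ↦ succ_le m hm

theorem eq_zero_of_pderiv_eq_mul [IsDomain R] {i : σ} {f g : MvPolynomial σ R} (hg : g ≠ 0)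
    (h : pderiv i f = g * f) : f = 0 := by
  by_contra hf
  have := degreeOf_pderiv_lt (h ▸ mul_ne_zero hg hf)
  rw [h, degreeOf_mul_eq hg hf] at this
  omega

theorem weightedHomogeneousComponent_weightedTotalDegree_ne_zero (w : σ → ℕ)
    {φ : MvPolynomial σ R} (h : φ ≠ 0) :
    weightedHomogeneousComponent w (weightedTotalDegree w φ) φ ≠ 0 := by
  classical
  obtain ⟨m, hm, hmax⟩ :=
    Finset.exists_mem_eq_sup _ (support_nonempty.mpr h) (Finsupp.weight w)
  have hmax : Finsupp.weight w m = weightedTotalDegree w φ := hmax.symm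
  refine ne_zero_iff.mpr ⟨m, ?_⟩
  rw [coeff_weightedHomogeneousComponent, if_pos hmax]
  exact mem_support_iff.mp hm

theorem sum_weightedHomogeneousComponent_range (w : σ → ℕ) (φ : MvPolynomial σ R) :
    ∑ n ∈ Finset.range (weightedTotalDegree w φ + 1), weightedHomogeneousComponent w n φ = φ := by
  conv_rhs => rw [← sum_weightedHomogeneousComponent w φ]
  refine (finsum_eq_sum_of_support_subset _ fun n hn ↦ ?_).symm
  rw [Finset.coe_range, Set.mem_Iio, Nat.lt_succ_iff]
  by_contra! hlt
  exact hn (weightedHomogeneousComponent_eq_zero n φ hlt)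

/-- Degree in the `yⱼ = X (some j)`, ignoring `x = X none`. -/
def yWeight {ι : Type*} : Option ι → ℕ
  | none => 0
  | some _ => 1

theorem isWeightedHomogeneous_toMvPolynomial_none {ι : Type*} (p : R[X]) :
    (p.toMvPolynomial none : MvPolynomial (Option ι) R).IsWeightedHomogeneous yWeight 0 := by
  induction p using Polynomial.induction_on' with
  | add p q hp hq => rw [map_add]; exact hp.add hq
  | monomial n c =>
    rw [Polynomial.toMvPolynomial, Polynomial.aeval_monomial, algebraMap_eq]
    simpa [yWeight] using
      (isWeightedHomogeneous_C yWeight c).mul ((isWeightedHomogeneous_X R yWeight none).pow n)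

theorem exists_toMvPolynomial_eq_of_isWeightedHomogeneous_zero {ι : Type*}
    {q : MvPolynomial (Option ι) R} (hq : q.IsWeightedHomogeneous yWeight 0) :
    ∃ p : R[X], p.toMvPolynomial none = q := by
  have : q ∈ supported R {none} := by
    rw [mem_supported]
    intro i hi
    obtain ⟨m, hm, hi⟩ := (mem_vars_iff_mem_support i).mp hi
    cases i with
    | none => rfl
    | some j =>
      have := Finsupp.le_weight_of_ne_zero' yWeight (Finsupp.mem_support_iff.mp hi)
      rw [hq (mem_support_iff.mp hm)] at this
      simp [yWeight] at this
  rwa [supported_eq_adjoin_X, Set.image_singleton, Algebra.adjoin_singleton_eq_range_aeval] at this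

end MvPolynomial

section Shamsuddin

variable {K ι : Type*} [CommRing K]

/-- `D = ∂ₓ + Σⱼ (a(x) yⱼ + bⱼ(x)) ∂_{yⱼ}`, where `x = X none` and `yⱼ = X (some j)`. -/
def IsShamsuddin (a : K[X]) (b : ι → K[X])
    (D : Derivation K (MvPolynomial (Option ι) K) (MvPolynomial (Option ι) K)) : Prop :=
  D (X none) = 1 ∧
    ∀ j, D (X (some j)) = a.toMvPolynomial none * X (some j) + (b j).toMvPolynomial none

namespace IsShamsuddin

variable [Fintype ι] {a : K[X]} {b : ι → K[X]}
  {D : Derivation K (MvPolynomial (Option ι) K) (MvPolynomial (Option ι) K)}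

theorem apply_eq (hD : IsShamsuddin a b D) (φ : MvPolynomial (Option ι) K) :
    D φ = pderiv none φ + ∑ j, (a.toMvPolynomial none * X (some j) + (b j).toMvPolynomial none) *
      pderiv (some j) φ := by
  have : D = pderiv none +
      ∑ j, (a.toMvPolynomial none * X (some j) + (b j).toMvPolynomial none) • pderiv (some j) := by
    classical
    refine derivation_ext fun i ↦ ?_
    cases i with
    | none => simp [hD.1, Derivation.finset_sum_apply]
    | some j => simp [hD.2, Derivation.finset_sum_apply, pderiv_X, Pi.single_apply]
  simp [this, Derivation.finset_sum_apply]

theorem apply_eq_of_isWeightedHomogeneous (hD : IsShamsuddin a b D)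
    {φ : MvPolynomial (Option ι) K} {n : ℕ} (hφ : φ.IsWeightedHomogeneous yWeight n) :
    D φ = (pderiv none φ + n • (a.toMvPolynomial none * φ)) +
      ∑ j, (b j).toMvPolynomial none * pderiv (some j) φ := by
  have euler : ∑ j, X (some j) * pderiv (some j) φ = n • φ := by
    simpa [Fintype.sum_option, yWeight] using hφ.sum_weight_X_mul_pderiv
  rw [hD.apply_eq, ← mul_smul_comm, ← euler]
  simp only [add_mul, mul_assoc, Finset.sum_add_distrib, Finset.mul_sum]
  ring

theorem weightedHomogeneousComponent_apply_of_isWeightedHomogeneous (hD : IsShamsuddin a b D)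
    {φ : MvPolynomial (Option ι) K} {n d : ℕ} (hφ : φ.IsWeightedHomogeneous yWeight n)
    (hnd : n ≤ d) (hd : d ≠ 0) :
    weightedHomogeneousComponent yWeight d (D φ) =
      if n = d then pderiv none φ + n • (a.toMvPolynomial none * φ) else 0 := by
  have hx : (pderiv none φ + n • (a.toMvPolynomial none * φ)).IsWeightedHomogeneous yWeight n :=
    (hφ.pderiv (add_zero n)).add <| nsmul_mem
      (S := weightedHomogeneousSubmodule K yWeight n)
      (by simpa using (isWeightedHomogeneous_toMvPolynomial_none a).mul hφ) n
  have hy : (∑ j, (b j).toMvPolynomial none * pderiv (some j) φ).IsWeightedHomogeneous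
      yWeight (n - 1) :=
    IsWeightedHomogeneous.sum _ _ _ fun j _ ↦ by
      simpa [yWeight] using
        (isWeightedHomogeneous_toMvPolynomial_none (b j)).mul (hφ.pderiv_tsub (some j))
  rw [hD.apply_eq_of_isWeightedHomogeneous hφ, map_add,
    hy.weightedHomogeneousComponent_ne d (by omega), add_zero]
  split_ifs with h
  · subst h; exact hx.weightedHomogeneousComponent_same
  · exact hx.weightedHomogeneousComponent_ne d (Ne.symm h)

theorem exists_toMvPolynomial_eq_of_apply_eq_one [IsDomain K] [CharZero K]
    (hD : IsShamsuddin a b D) (ha : a ≠ 0) {q : MvPolynomial (Option ι) K} (hq : D q = 1) :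
    ∃ p : K[X], p.toMvPolynomial none = q := by
  set d := weightedTotalDegree yWeight q
  obtain hd | hd := eq_or_ne d 0
  · exact exists_toMvPolynomial_eq_of_isWeightedHomogeneous_zero
      (isWeightedHomogeneous_zero_iff_weightedTotalDegree_eq_zero.mpr hd)
  exfalso
  set f := weightedHomogeneousComponent yWeight d q
  have htop : weightedHomogeneousComponent yWeight d (D q) =
      pderiv none f + d • (a.toMvPolynomial none * f) := by
    conv_lhs => rw [← sum_weightedHomogeneousComponent_range yWeight q]
    rw [map_sum, map_sum, Finset.sum_eq_single d (fun n hn hne ↦ ?_)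
      (absurd (Finset.self_mem_range_succ d))]
    · rw [hD.weightedHomogeneousComponent_apply_of_isWeightedHomogeneous
        (weightedHomogeneousComponent_isWeightedHomogeneous d q) le_rfl hd, if_pos rfl]
    · rw [hD.weightedHomogeneousComponent_apply_of_isWeightedHomogeneous
        (weightedHomogeneousComponent_isWeightedHomogeneous n q)
        (Nat.lt_succ_iff.mp (Finset.mem_range.mp hn)) hd, if_neg hne]
  have hf : pderiv none f = -(d • a.toMvPolynomial none) * f := by
    rw [hq, (isWeightedHomogeneous_one K yWeight).weightedHomogeneousComponent_ne d hd] at htop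
    rw [neg_mul, smul_mul_assoc, eq_neg_iff_add_eq_zero, htop]
  refine weightedHomogeneousComponent_weightedTotalDegree_ne_zero yWeight (φ := q) ?_
    (eq_zero_of_pderiv_eq_mul ?_ hf)
  · rintro rfl
    simp at hq
  · exact neg_ne_zero.mpr <| smul_ne_zero hd <|
      (map_ne_zero_iff _ (Polynomial.toMvPolynomial_injective none)).mpr ha

end IsShamsuddin

end Shamsuddin

/-- For a Shamsuddin derivation `D = ∂x + Σ (a(x)yⱼ + bⱼ(x)) ∂yⱼ` with `a ≠ 0`,
any automorphism `ρ` commuting with `D` satisfies `ρ(x) ∈ K[x]`. -/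
theorem stmt6 {K : Type*} [Field K] [CharZero K] (r : ℕ)
    (a : Polynomial K) (ha : a ≠ 0) (b : Fin r → Polynomial K)
    (D : Derivation K (MvPolynomial (Option (Fin r)) K) (MvPolynomial (Option (Fin r)) K))
    (hDx : D (MvPolynomial.X none) = 1)
    (hDy : ∀ j : Fin r, D (MvPolynomial.X (some j)) =
      Polynomial.aeval (MvPolynomial.X (none : Option (Fin r))) a * MvPolynomial.X (some j) +
        Polynomial.aeval (MvPolynomial.X (none : Option (Fin r))) (b j))
    (ρ : MvPolynomial (Option (Fin r)) K ≃ₐ[K] MvPolynomial (Option (Fin r)) K)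
    (hρ : ∀ p, ρ (D p) = D (ρ p)) :
    ∃ p : Polynomial K,
      ρ (MvPolynomial.X none) = Polynomial.aeval (MvPolynomial.X (none : Option (Fin r))) p := by
  have hD : IsShamsuddin a b D := ⟨hDx, hDy⟩
  obtain ⟨p, hp⟩ :=
    hD.exists_toMvPolynomial_eq_of_apply_eq_one ha (q := ρ (X none)) (by rw [← hρ, hDx, map_one])
  exact ⟨p, hp.symm⟩
end

section
/- Let K be a field of characteristic zero and let D = ∂_x + Σⱼ₌₁ʳ (a(x)yⱼ + bⱼ(x)) ∂_{yⱼ} be a Shamsuddin derivation of R = K[x, y₁, …, y_r]. Suppose there exist (k₁, …, k_r) ∈ Kʳ with k₁ = 1 and a polynomial Q ∈ K[x] such that Q' = a·Q + Σⱼ kⱼ bⱼ. Then for every e ∈ K with e ≠ 0 and e ≠ 1, the K-algebra endomorphism ρ of R defined by ρ(x) = x, ρ(y₁) = (1-e)y₁ - e·Σⱼ₌₂ʳ kⱼ yⱼ + e·Q(x), and ρ(yⱼ) = yⱼ for j ≥ 2, is an automorphism of R commuting with D, and ρ ≠ id. -/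
/-!
Since `k₁ = 1`, the hypothesis on `Q` says exactly that `L = Σⱼ kⱼ yⱼ - Q(x)` is a Darboux
polynomial of `D` with the same cofactor as the `yⱼ`: `D L = a L`. Writing `y₁ = L + w` with
`w = Q(x) - Σ_{j ≥ 2} kⱼ yⱼ` free of `y₁`, the map `ρ` fixes `x`, `w` and the `yⱼ` (`j ≥ 2`) and
multiplies `L` by `s = 1 - e`. Such dilations compose by multiplying their ratios, so `ρ` is an
automorphism; it commutes with `D` because `D y₁ = a y₁ + b₁(x)` and `D L = a L` are compatible
with scaling `L`; and it is not the identity since `s ≠ 1` and `w ≠ y₁`.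
-/

open MvPolynomial

namespace MvPolynomial

variable {R σ : Type*}

theorem algHom_derivation_comm_of_X [CommSemiring R] {A : Type*} [CommSemiring A] [Algebra R A]
    (φ : MvPolynomial σ R →ₐ[R] A) (D₁ : Derivation R (MvPolynomial σ R) (MvPolynomial σ R))
    (D₂ : Derivation R A A) (h : ∀ i, φ (D₁ (X i)) = D₂ (φ (X i))) (p : MvPolynomial σ R) :
    φ (D₁ p) = D₂ (φ p) := by
  induction p using induction_on with
  | C c => simp [derivation_C, ← algebraMap_eq]
  | add p q hp hq => simp only [map_add, hp, hq]
  | mul_X p i hp =>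
    simp only [Derivation.leibniz, map_mul, map_add, smul_eq_mul, hp, h]

variable [CommRing R]

theorem derivation_apply_C_mul (D : Derivation R (MvPolynomial σ R) (MvPolynomial σ R)) (c : R)
    (p : MvPolynomial σ R) : D (C c * p) = C c * D p := by
  rw [C_mul', D.map_smul, smul_eq_C_mul]

section Dilate

variable [DecidableEq σ]

/-- The dilation with ratio `s` about `X i = w`: when `w` does not involve `X i` it fixes `w`
and the other variables and multiplies `X i - w` by `s`. -/
noncomputable def dilate (i : σ) (w : MvPolynomial σ R) (s : R) :
    MvPolynomial σ R →ₐ[R] MvPolynomial σ R :=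
  aeval (Function.update X i (C s * X i + C (1 - s) * w))

variable {i : σ} {w : MvPolynomial σ R}

@[simp]
theorem dilate_X_self (s : R) : dilate i w s (X i) = C s * X i + C (1 - s) * w := by
  simp [dilate]

@[simp]
theorem dilate_X_of_ne (s : R) {j : σ} (hj : j ≠ i) : dilate i w s (X j) = X j := by
  simp [dilate, hj]

theorem dilate_apply_of_mem_supported (s : R) {p : MvPolynomial σ R}
    (hp : p ∈ supported R {i}ᶜ) : dilate i w s p = p :=
  AlgHom.adjoin_le_equalizer (dilate i w s) (AlgHom.id R _)
    (by rintro _ ⟨j, hj, rfl⟩; exact dilate_X_of_ne s hj) hp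

theorem dilate_comp_dilate (hw : w ∈ supported R {i}ᶜ) (s t : R) :
    (dilate i w s).comp (dilate i w t) = dilate i w (s * t) := by
  refine algHom_ext fun j => ?_
  obtain rfl | hj := eq_or_ne j i
  · simp only [AlgHom.comp_apply, dilate_X_self, map_add, map_mul, algHom_C,
      dilate_apply_of_mem_supported _ hw, algebraMap_eq, map_sub, map_one]
    ring
  · simp [dilate_X_of_ne _ hj]

theorem dilate_one : dilate i w (1 : R) = AlgHom.id R _ :=
  algHom_ext fun j => by obtain rfl | hj := eq_or_ne j i <;> simp [*]

noncomputable def dilateEquiv (hw : w ∈ supported R {i}ᶜ) (u : Rˣ) :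
    MvPolynomial σ R ≃ₐ[R] MvPolynomial σ R :=
  AlgEquiv.ofAlgHom (dilate i w u) (dilate i w ↑u⁻¹)
    (by rw [dilate_comp_dilate hw, Units.mul_inv, dilate_one])
    (by rw [dilate_comp_dilate hw, Units.inv_mul, dilate_one])

@[simp]
theorem dilateEquiv_apply (hw : w ∈ supported R {i}ᶜ) (u : Rˣ) (p : MvPolynomial σ R) :
    dilateEquiv hw u p = dilate i w u p := rfl

theorem dilate_X_self_ne [IsDomain R] (hw : w ∈ supported R {i}ᶜ) {s : R} (hs : s ≠ 1) :
    dilate i w s (X i) ≠ X i := by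
  intro h
  rw [dilate_X_self] at h
  have hzero : C (1 - s) * (w - X i) = 0 := by
    rw [map_sub, map_one] at h ⊢
    linear_combination h
  rcases mul_eq_zero.1 hzero with h1 | h2
  · exact hs (sub_eq_zero.1 (C_eq_zero.1 h1)).symm
  · rw [sub_eq_zero.1 h2, X_mem_supported] at hw
    exact hw rfl

theorem dilate_derivation_comm (hw : w ∈ supported R {i}ᶜ)
    (D : Derivation R (MvPolynomial σ R) (MvPolynomial σ R)) {A B : MvPolynomial σ R}
    (hA : A ∈ supported R {i}ᶜ) (hB : B ∈ supported R {i}ᶜ)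
    (hDi : D (X i) = A * X i + B) (hDw : D (X i - w) = A * (X i - w))
    (hDj : ∀ j ≠ i, D (X j) ∈ supported R {i}ᶜ) (s : R) (p : MvPolynomial σ R) :
    dilate i w s (D p) = D (dilate i w s p) := by
  refine algHom_derivation_comm_of_X _ D D (fun j => ?_) p
  obtain rfl | hj := eq_or_ne j i
  · rw [dilate_X_self, D.map_add, derivation_apply_C_mul, derivation_apply_C_mul, hDi, map_add,
      map_mul, dilate_X_self, dilate_apply_of_mem_supported _ hA,
      dilate_apply_of_mem_supported _ hB]
    rw [D.map_sub, hDi] at hDw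
    simp only [map_sub, map_one]
    linear_combination (1 - C s) * hDw
  · rw [dilate_X_of_ne _ hj, dilate_apply_of_mem_supported _ (hDj j hj)]

end Dilate

section Shamsuddin

variable {ι : Type*} {D : Derivation R (MvPolynomial (Option ι) R) (MvPolynomial (Option ι) R)}

theorem derivation_aeval_X_none (hDx : D (X none) = 1) (p : Polynomial R) :
    D (Polynomial.aeval (X none) p) = Polynomial.aeval (X none) (Polynomial.derivative p) := by
  rw [D.map_aeval, hDx, smul_eq_mul, mul_one]

theorem derivation_linear_form_eq_mul [Fintype ι] {a : Polynomial R} {b : ι → Polynomial R}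
    (hDx : D (X none) = 1)
    (hDy : ∀ j, D (X (some j)) =
      Polynomial.aeval (X none) a * X (some j) + Polynomial.aeval (X none) (b j))
    (k : ι → R) {Q : Polynomial R}
    (hQ : Polynomial.derivative Q = a * Q + ∑ j, Polynomial.C (k j) * b j) :
    D (∑ j, C (k j) * X (some j) - Polynomial.aeval (X none) Q) =
      Polynomial.aeval (X none) a * (∑ j, C (k j) * X (some j) - Polynomial.aeval (X none) Q) := by
  simp only [D.map_sub, map_sum, derivation_apply_C_mul, hDy, derivation_aeval_X_none hDx, hQ,
    map_add, map_mul, Polynomial.aeval_C, algebraMap_eq, mul_add, Finset.sum_add_distrib,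
    mul_sub, Finset.mul_sum, mul_left_comm (C _)]
  ring

end Shamsuddin

end MvPolynomial

theorem stmt9_general {K : Type*} [Field K] (r : ℕ) (hr : 0 < r)
    (a : Polynomial K) (b : Fin r → Polynomial K)
    (D : Derivation K (MvPolynomial (Option (Fin r)) K) (MvPolynomial (Option (Fin r)) K))
    (hDx : D (MvPolynomial.X none) = 1)
    (hDy : ∀ j : Fin r, D (MvPolynomial.X (some j)) =
      Polynomial.aeval (MvPolynomial.X (none : Option (Fin r))) a * MvPolynomial.X (some j) +
        Polynomial.aeval (MvPolynomial.X (none : Option (Fin r))) (b j))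
    (k : Fin r → K) (hk1 : k ⟨0, hr⟩ = 1) (Q : Polynomial K)
    (hQ : Polynomial.derivative Q = a * Q + ∑ j : Fin r, Polynomial.C (k j) * b j) :
    ∀ e : K, e ≠ 0 → e ≠ 1 →
      ∃ ρ : MvPolynomial (Option (Fin r)) K ≃ₐ[K] MvPolynomial (Option (Fin r)) K,
        (∀ p, ρ (D p) = D (ρ p)) ∧
        ρ (MvPolynomial.X none) = MvPolynomial.X none ∧
        ρ (MvPolynomial.X (some ⟨0, hr⟩)) =
          MvPolynomial.C (1 - e) * MvPolynomial.X (some ⟨0, hr⟩) -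
            MvPolynomial.C e *
              (∑ j ∈ Finset.univ.erase (⟨0, hr⟩ : Fin r),
                MvPolynomial.C (k j) * MvPolynomial.X (some j)) +
            MvPolynomial.C e *
              Polynomial.aeval (MvPolynomial.X (none : Option (Fin r))) Q ∧
        (∀ j : Fin r, j ≠ ⟨0, hr⟩ → ρ (MvPolynomial.X (some j)) = MvPolynomial.X (some j)) ∧
        ρ ≠ AlgEquiv.refl := by
  intro e he0 he1
  set z : Fin r := ⟨0, hr⟩
  set S := ∑ j ∈ Finset.univ.erase z, C (k j) * X (some j)
  have hx_mem : ∀ p : Polynomial K, Polynomial.aeval (X none) p ∈ supported K {some z}ᶜ :=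
    fun p => Algebra.adjoin_mono (Set.singleton_subset_iff.2 (Set.mem_image_of_mem X
      (by simp : none ∈ ({some z}ᶜ : Set (Option (Fin r))))))
      (Polynomial.aeval_mem_adjoin_singleton K _)
  have hw : Polynomial.aeval (X none) Q - S ∈ supported K {some z}ᶜ := by
    refine sub_mem (hx_mem Q) (sum_mem fun j hj => mul_mem (Subalgebra.algebraMap_mem _ (k j)) ?_)
    exact X_mem_supported.2 (by simpa using Finset.ne_of_mem_erase hj)
  have hL : X (some z) - (Polynomial.aeval (X none) Q - S) =
      ∑ j, C (k j) * X (some j) - Polynomial.aeval (X none) Q := by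
    rw [← Finset.add_sum_erase _ _ (Finset.mem_univ z), hk1, C_1, one_mul]
    ring
  have hDj : ∀ j ≠ some z, D (X j) ∈ supported K {some z}ᶜ := by
    rintro (_ | j) hj
    · exact hDx ▸ one_mem _
    · exact hDy j ▸ add_mem (mul_mem (hx_mem a) (X_mem_supported.2 hj)) (hx_mem (b j))
  refine ⟨dilateEquiv hw (Units.mk0 (1 - e) (sub_ne_zero.2 he1.symm)), fun p => ?_, ?_, ?_, ?_, ?_⟩
  · exact dilate_derivation_comm hw D (hx_mem a) (hx_mem (b z)) (hDy z)
      (hL ▸ derivation_linear_form_eq_mul hDx hDy k hQ) hDj _ p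
  · simp
  · simp only [dilateEquiv_apply, Units.val_mk0, dilate_X_self, sub_sub_cancel]
    ring
  · intro j hj
    simpa using dilate_X_of_ne _ (Option.some_injective _ |>.ne hj)
  · intro h
    refine dilate_X_self_ne hw (s := 1 - e) (by simpa using he0) ?_
    simpa using congr($h (X (some z)))

/-- If `Q' = a·Q + Σⱼ kⱼ bⱼ` with `k₁ = 1`, then for every `e ∈ K \ {0,1}` the map
`x ↦ x`, `y₁ ↦ (1-e)y₁ - e·Σ_{j≥2} kⱼ yⱼ + e·Q(x)`, `yⱼ ↦ yⱼ (j ≥ 2)` is a non-identity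
automorphism commuting with `D = ∂x + Σⱼ (a(x)yⱼ + bⱼ(x)) ∂yⱼ`. -/
theorem stmt9 {K : Type*} [Field K] [CharZero K] (r : ℕ) (hr : 0 < r)
    (a : Polynomial K) (b : Fin r → Polynomial K)
    (D : Derivation K (MvPolynomial (Option (Fin r)) K) (MvPolynomial (Option (Fin r)) K))
    (hDx : D (MvPolynomial.X none) = 1)
    (hDy : ∀ j : Fin r, D (MvPolynomial.X (some j)) =
      Polynomial.aeval (MvPolynomial.X (none : Option (Fin r))) a * MvPolynomial.X (some j) +
        Polynomial.aeval (MvPolynomial.X (none : Option (Fin r))) (b j))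
    (k : Fin r → K) (hk1 : k ⟨0, hr⟩ = 1) (Q : Polynomial K)
    (hQ : Polynomial.derivative Q = a * Q + ∑ j : Fin r, Polynomial.C (k j) * b j) :
    ∀ e : K, e ≠ 0 → e ≠ 1 →
      ∃ ρ : MvPolynomial (Option (Fin r)) K ≃ₐ[K] MvPolynomial (Option (Fin r)) K,
        (∀ p, ρ (D p) = D (ρ p)) ∧
        ρ (MvPolynomial.X none) = MvPolynomial.X none ∧
        ρ (MvPolynomial.X (some ⟨0, hr⟩)) =
          MvPolynomial.C (1 - e) * MvPolynomial.X (some ⟨0, hr⟩) -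
            MvPolynomial.C e *
              (∑ j ∈ Finset.univ.erase (⟨0, hr⟩ : Fin r),
                MvPolynomial.C (k j) * MvPolynomial.X (some j)) +
            MvPolynomial.C e *
              Polynomial.aeval (MvPolynomial.X (none : Option (Fin r))) Q ∧
        (∀ j : Fin r, j ≠ ⟨0, hr⟩ → ρ (MvPolynomial.X (some j)) = MvPolynomial.X (some j)) ∧
        ρ ≠ AlgEquiv.refl :=
  stmt9_general r hr a b D hDx hDy k hk1 Q hQ
end

section
/- Let K be a field of characteristic zero and let D = ∂_x + Σⱼ₌₁ⁿ (aⱼ(x)yⱼ + bⱼ(x, y₁, …, y_{j-1})) ∂_{yⱼ} be a derivation of K[x, y₁, …, y_n] of triangular-plus-linear type. If aⱼ ∈ K (i.e., each aⱼ is constant) for all j, then D is locally finite. -/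
/-!
An element `f` is locally finite for `D` exactly when it lies in a finitely generated
`D`-stable subspace. By the Leibniz rule such elements form a subalgebra, so it suffices to
treat the generators. `D x = 1` handles `x`, and `D yⱼ = aⱼ yⱼ + bⱼ` with `aⱼ` a constant shows
that `yⱼ` together with a `D`-stable subspace containing `bⱼ` spans a `D`-stable subspace;
since `bⱼ` only involves `x` and the `yᵢ` with `i < j`, induction on `j` concludes.
-/

open MvPolynomial

namespace Derivation

variable {K R : Type*} [Field K] [CommRing R] [Algebra K R]

def IsLocallyFiniteAt (D : Derivation K R R) (f : R) : Prop :=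
  ∃ M : Submodule K R, M.FG ∧ f ∈ M ∧ ∀ m ∈ M, D m ∈ M

variable {D : Derivation K R R}

theorem isLocallyFiniteAt_algebraMap (c : K) : D.IsLocallyFiniteAt (algebraMap K R c) := by
  refine ⟨Submodule.span K {1}, Submodule.fg_span_singleton 1, ?_, fun m hm => ?_⟩
  · rw [Algebra.algebraMap_eq_smul_one]
    exact Submodule.smul_mem _ c (Submodule.mem_span_singleton_self 1)
  · obtain ⟨c, rfl⟩ := Submodule.mem_span_singleton.1 hm
    simp

theorem IsLocallyFiniteAt.add {f g : R} (hf : D.IsLocallyFiniteAt f)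
    (hg : D.IsLocallyFiniteAt g) : D.IsLocallyFiniteAt (f + g) := by
  obtain ⟨M, hMfg, hfM, hM⟩ := hf
  obtain ⟨N, hNfg, hgN, hN⟩ := hg
  refine ⟨M ⊔ N, hMfg.sup hNfg, Submodule.add_mem_sup hfM hgN, fun p hp => ?_⟩
  obtain ⟨m, hm, n, hn, rfl⟩ := Submodule.mem_sup.1 hp
  rw [map_add]
  exact Submodule.add_mem_sup (hM m hm) (hN n hn)

theorem IsLocallyFiniteAt.mul {f g : R} (hf : D.IsLocallyFiniteAt f)
    (hg : D.IsLocallyFiniteAt g) : D.IsLocallyFiniteAt (f * g) := by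
  obtain ⟨M, hMfg, hfM, hM⟩ := hf
  obtain ⟨N, hNfg, hgN, hN⟩ := hg
  refine ⟨M * N, hMfg.mul hNfg, Submodule.mul_mem_mul hfM hgN, fun p hp => ?_⟩
  have hMN : M * N ≤ (M * N).comap D.toLinearMap := Submodule.mul_le.2 fun m hm n hn => by
    change D (m * n) ∈ M * N
    rw [leibniz, smul_eq_mul, smul_eq_mul, mul_comm n]
    exact add_mem (Submodule.mul_mem_mul hm (hN n hn)) (Submodule.mul_mem_mul (hM m hm) hn)
  exact hMN hp

variable (D) in
def locallyFiniteSubalgebra : Subalgebra K R where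
  carrier := {f | D.IsLocallyFiniteAt f}
  mul_mem' := IsLocallyFiniteAt.mul
  add_mem' := IsLocallyFiniteAt.add
  algebraMap_mem' := isLocallyFiniteAt_algebraMap

theorem IsLocallyFiniteAt.of_apply_eq_smul_add {f y : R} (c : K) (hf : D.IsLocallyFiniteAt f)
    (hy : D y = c • y + f) : D.IsLocallyFiniteAt y := by
  obtain ⟨M, hMfg, hfM, hM⟩ := hf
  refine ⟨Submodule.span K {y} ⊔ M, (Submodule.fg_span_singleton y).sup hMfg,
    Submodule.mem_sup_left (Submodule.mem_span_singleton_self y), fun p hp => ?_⟩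
  obtain ⟨_, hz, m, hm, rfl⟩ := Submodule.mem_sup.1 hp
  obtain ⟨d, rfl⟩ := Submodule.mem_span_singleton.1 hz
  rw [map_add, map_smul, hy, smul_add, smul_smul, add_assoc]
  exact Submodule.add_mem_sup (Submodule.smul_mem _ _ (Submodule.mem_span_singleton_self y))
    (add_mem (Submodule.smul_mem _ d hfM) (hM m hm))

theorem IsLocallyFiniteAt.finiteDimensional_span_iterate {f : R} (hf : D.IsLocallyFiniteAt f) :
    FiniteDimensional K (Submodule.span K (Set.range fun i : ℕ => (D.toLinearMap ^ i) f)) := by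
  obtain ⟨M, hMfg, hfM, hM⟩ := hf
  have : FiniteDimensional K M := Module.Finite.iff_fg.2 hMfg
  refine Submodule.finiteDimensional_of_le (S₂ := M) (Submodule.span_le.2 ?_)
  rintro _ ⟨i, rfl⟩
  exact Module.End.pow_apply_mem_of_forall_mem i hM f hfM

end Derivation

theorem MvPolynomial.mem_of_forall_X_mem_of_mem_vars {σ R : Type*} [CommSemiring R]
    {S : Subalgebra R (MvPolynomial σ R)} {p : MvPolynomial σ R}
    (h : ∀ v ∈ p.vars, X v ∈ S) : p ∈ S := by
  have hp := mem_supported_vars p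
  rw [supported_eq_adjoin_X] at hp
  refine Algebra.adjoin_le ?_ hp
  rintro _ ⟨v, hv, rfl⟩
  exact h v hv

theorem stmt11_general {K : Type*} [Field K] (n : ℕ)
    (a : Fin n → K) (b : Fin n → MvPolynomial (Option (Fin n)) K)
    (hb : ∀ j : Fin n, ∀ v ∈ (b j).vars, v = none ∨ ∃ i : Fin n, v = some i ∧ i < j)
    (D : Derivation K (MvPolynomial (Option (Fin n)) K) (MvPolynomial (Option (Fin n)) K))
    (hDx : D (MvPolynomial.X none) = 1)
    (hDy : ∀ j : Fin n, D (MvPolynomial.X (some j)) =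
      MvPolynomial.C (a j) * MvPolynomial.X (some j) + b j) :
    ∀ f : MvPolynomial (Option (Fin n)) K,
      FiniteDimensional K
        ↥(Submodule.span K (Set.range fun i : ℕ => (D.toLinearMap ^ i) f)) := by
  have hx : D.IsLocallyFiniteAt (X none) :=
    .of_apply_eq_smul_add 0 (Derivation.isLocallyFiniteAt_algebraMap 1) (by simp [hDx])
  have hy (j : Fin n) : D.IsLocallyFiniteAt (X (some j)) := by
    induction j using WellFoundedLT.induction with
    | _ j ih =>
      refine .of_apply_eq_smul_add (a j)
        (mem_of_forall_X_mem_of_mem_vars (S := D.locallyFiniteSubalgebra) fun v hv => ?_)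
        (by rw [hDy, smul_eq_C_mul])
      rcases hb j v hv with rfl | ⟨i, rfl, hi⟩
      exacts [hx, ih i hi]
  intro f
  refine Derivation.IsLocallyFiniteAt.finiteDimensional_span_iterate
    (mem_of_forall_X_mem_of_mem_vars (S := D.locallyFiniteSubalgebra) ?_)
  rintro (_ | j) -
  exacts [hx, hy j]

/-- A triangular derivation `D = ∂x + Σⱼ (aⱼ yⱼ + bⱼ(x, y₁,…,y_{j-1})) ∂yⱼ` with all
`aⱼ ∈ K` constants is locally finite. -/
theorem stmt11 {K : Type*} [Field K] [CharZero K] (n : ℕ)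
    (a : Fin n → K) (b : Fin n → MvPolynomial (Option (Fin n)) K)
    (hb : ∀ j : Fin n, ∀ v ∈ (b j).vars, v = none ∨ ∃ i : Fin n, v = some i ∧ i < j)
    (D : Derivation K (MvPolynomial (Option (Fin n)) K) (MvPolynomial (Option (Fin n)) K))
    (hDx : D (MvPolynomial.X none) = 1)
    (hDy : ∀ j : Fin n, D (MvPolynomial.X (some j)) =
      MvPolynomial.C (a j) * MvPolynomial.X (some j) + b j) :
    ∀ f : MvPolynomial (Option (Fin n)) K,
      FiniteDimensional K
        ↥(Submodule.span K (Set.range fun i : ℕ => (D.toLinearMap ^ i) f)) :=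
  stmt11_general n a b hb D hDx hDy
end

section
/- Let K be a field of characteristic zero and let D = ∂_x + Σⱼ₌₁ⁿ (aⱼ(x)yⱼ + bⱼ(x, y₁, …, y_{j-1})) ∂_{yⱼ} be a derivation of K[x, y₁, …, y_n]. If deg a_{i₀}(x) ≥ 1 for some i₀, then D is not locally finite; specifically, the K-span of {Dⁱ(y_{i₀}) : i ≥ 1} is infinite-dimensional. -/
/-!
Write `y = y_{i₀}` and let `A = K[x, y₁, …, y_{i₀-1}]`. Then `A` is `D`-stable and
`D y = a(x) y + b` with `b ∈ A`, so by induction `Dᵏ y = c_k(x) y + r_k` with `r_k ∈ A` and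
`c_k = (d/dx + a)ᵏ 1`, a polynomial of degree `k · deg a`. The coefficient of `y` depends
linearly on `Dᵏ y` (take `∂/∂y`, then send `x ↦ X` and the other variables to `0`), so a
finite-dimensional span of the `Dᵏ y` would give polynomials `c_k` of bounded degree.
-/

open Polynomial

namespace Polynomial

variable {R : Type*} [CommRing R]

theorem exists_natDegree_le_of_mem_of_finite (W : Submodule R R[X]) [Module.Finite R W] :
    ∃ n : ℕ, ∀ p ∈ W, p.natDegree ≤ n := by
  obtain ⟨s, hs⟩ := Module.Finite.iff_fg.mp (inferInstance : Module.Finite R W)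
  obtain ⟨n, hn⟩ := span_le_degreeLE_of_finite s.finite_toSet
  exact ⟨n, fun p hp => natDegree_le_iff_degree_le.mpr (mem_degreeLE.mp (hn (hs ▸ hp)))⟩

noncomputable def derivAddMul (a : R[X]) : R[X] →ₗ[R] R[X] :=
  derivative + LinearMap.mulLeft R a

theorem derivAddMul_apply (a p : R[X]) : derivAddMul a p = derivative p + a * p := rfl

variable [IsDomain R]

theorem natDegree_derivAddMul {a p : R[X]} (ha : a ≠ 0) (hp : p ≠ 0) :
    derivAddMul a p ≠ 0 ∧ (derivAddMul a p).natDegree = a.natDegree + p.natDegree := by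
  have hap : a * p ≠ 0 := mul_ne_zero ha hp
  have hlt : (derivative p).degree < (a * p).degree :=
    (degree_derivative_lt hp).trans_le <| by
      rw [degree_mul]
      exact le_add_of_nonneg_left (zero_le_degree_iff.mpr ha)
  rw [derivAddMul_apply, add_comm]
  refine ⟨fun h => hap ?_, ?_⟩
  · rw [← degree_eq_bot, ← degree_add_eq_left_of_degree_lt hlt, h, degree_zero]
  · rw [natDegree_add_eq_left_of_degree_lt hlt, natDegree_mul ha hp]

theorem natDegree_derivAddMul_pow (a : R[X]) (ha : a ≠ 0) (k : ℕ) :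
    (derivAddMul a ^ k) 1 ≠ 0 ∧ ((derivAddMul a ^ k) 1).natDegree = k * a.natDegree := by
  induction k with
  | zero => simp
  | succ k ih =>
    rw [pow_succ', Module.End.mul_apply]
    obtain ⟨hne, hdeg⟩ := natDegree_derivAddMul ha ih.1
    exact ⟨hne, by rw [hdeg, ih.2]; ring⟩

end Polynomial

namespace MvPolynomial

variable {R σ : Type*} [CommRing R] {S : Set σ}

theorem derivation_mem_supported (D : Derivation R (MvPolynomial σ R) (MvPolynomial σ R))
    (hD : ∀ s ∈ S, D (X s) ∈ supported R S) {p : MvPolynomial σ R}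
    (hp : p ∈ supported R S) :
    D p ∈ supported R S := by
  induction hp using Algebra.adjoin_induction with
  | mem _ hp => obtain ⟨s, hs, rfl⟩ := hp; exact hD s hs
  | algebraMap r => rw [D.map_algebraMap]; exact zero_mem _
  | add _ _ _ _ hp hq => rw [map_add]; exact add_mem hp hq
  | mul p q hp' hq' hp hq =>
    rw [D.leibniz, smul_eq_mul, smul_eq_mul]
    exact add_mem (mul_mem hp' hq) (mul_mem hq' hp)

theorem pderiv_eq_zero_of_mem_supported {i : σ} (hi : i ∉ S) {p : MvPolynomial σ R}
    (hp : p ∈ supported R S) : pderiv i p = 0 :=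
  pderiv_eq_zero_of_notMem_vars fun h => hi (mem_supported.mp hp h)

theorem aeval_X_mem_supported {x : σ} (hx : x ∈ S) (c : R[X]) :
    Polynomial.aeval (X x) c ∈ supported R S :=
  Algebra.adjoin_singleton_le (Algebra.subset_adjoin (Set.mem_image_of_mem X hx))
    (Polynomial.aeval_mem_adjoin_singleton R _)

section TriangularDerivation

variable (D : Derivation R (MvPolynomial σ R) (MvPolynomial σ R)) {x y : σ} {a : R[X]}
  {b : MvPolynomial σ R}

theorem exists_pow_apply_X_eq (hS : ∀ p ∈ supported R S, D p ∈ supported R S) (hx : x ∈ S)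
    (hDx : D (X x) = 1) (hDy : D (X y) = Polynomial.aeval (X x) a * X y + b)
    (hb : b ∈ supported R S) (k : ℕ) :
    ∃ r ∈ supported R S, (D.toLinearMap ^ k) (X y) =
      Polynomial.aeval (X x) ((derivAddMul a ^ k) 1) * X y + r := by
  induction k with
  | zero => exact ⟨0, zero_mem _, by simp⟩
  | succ k ih =>
    obtain ⟨r, hr, hk⟩ := ih
    set c := (derivAddMul a ^ k) 1
    refine ⟨Polynomial.aeval (X x) c * b + D r,
      add_mem (mul_mem (aeval_X_mem_supported hx c) hb) (hS r hr), ?_⟩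
    simp only [pow_succ', Module.End.mul_apply]
    rw [hk, Derivation.coeFn_coe, map_add, D.leibniz, D.map_aeval, hDx, hDy, derivAddMul_apply]
    simp only [smul_eq_mul, map_add, map_mul]
    ring

theorem aeval_pderiv_aeval_X_mul_X_add [DecidableEq σ] (hx : x ∈ S) (hy : y ∉ S) (c : R[X])
    {r : MvPolynomial σ R} (hr : r ∈ supported R S) :
    aeval (fun v => if v = x then Polynomial.X else 0)
      (pderiv y (Polynomial.aeval (X x) c * X y + r)) = c := by
  rw [map_add, (pderiv y).leibniz, pderiv_X_self, pderiv_eq_zero_of_mem_supported hy hr,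
    pderiv_eq_zero_of_mem_supported hy (aeval_X_mem_supported hx c), smul_eq_mul, smul_zero,
    mul_one, add_zero, add_zero, ← Polynomial.aeval_algHom_apply, aeval_X, if_pos rfl,
    Polynomial.aeval_X_left_apply]

theorem not_finite_span_range_pow_apply_X [IsDomain R]
    (hS : ∀ p ∈ supported R S, D p ∈ supported R S) (hx : x ∈ S) (hy : y ∉ S)
    (hDx : D (X x) = 1) (hDy : D (X y) = Polynomial.aeval (X x) a * X y + b)
    (hb : b ∈ supported R S) (ha : 0 < a.natDegree) :
    ¬ Module.Finite R
      (Submodule.span R (Set.range fun i : ℕ => (D.toLinearMap ^ (i + 1)) (X y))) := by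
  classical
  intro hfin
  set M := Submodule.span R (Set.range fun i : ℕ => (D.toLinearMap ^ (i + 1)) (X y))
  set φ := (aeval fun v => if v = x then (Polynomial.X : R[X]) else 0).toLinearMap ∘ₗ
    (pderiv (R := R) y).toLinearMap
  obtain ⟨n, hn⟩ := exists_natDegree_le_of_mem_of_finite (M.map φ)
  obtain ⟨r, hr, hpow⟩ := exists_pow_apply_X_eq D hS hx hDx hDy hb (n + 1)
  have hmem : (derivAddMul a ^ (n + 1)) 1 ∈ M.map φ := by
    refine ⟨_, Submodule.subset_span (Set.mem_range_self n), ?_⟩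
    rw [hpow]
    exact aeval_pderiv_aeval_X_mul_X_add hx hy _ hr
  have hdeg := hn _ hmem
  rw [(natDegree_derivAddMul_pow a (ne_zero_of_natDegree_gt ha) (n + 1)).2] at hdeg
  nlinarith

end TriangularDerivation

end MvPolynomial

open MvPolynomial

theorem stmt12_general {K : Type*} [Field K] (n : ℕ)
    (a : Fin n → Polynomial K) (b : Fin n → MvPolynomial (Option (Fin n)) K)
    (hb : ∀ j : Fin n, ∀ v ∈ (b j).vars, v = none ∨ ∃ i : Fin n, v = some i ∧ i < j)
    (D : Derivation K (MvPolynomial (Option (Fin n)) K) (MvPolynomial (Option (Fin n)) K))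
    (hDx : D (MvPolynomial.X none) = 1)
    (hDy : ∀ j : Fin n, D (MvPolynomial.X (some j)) =
      Polynomial.aeval (MvPolynomial.X (none : Option (Fin n))) (a j) * MvPolynomial.X (some j)
        + b j)
    (i₀ : Fin n) (ha : 1 ≤ (a i₀).natDegree) :
    ¬ FiniteDimensional K
        ↥(Submodule.span K
          (Set.range fun i : ℕ => (D.toLinearMap ^ (i + 1)) (MvPolynomial.X (some i₀)))) := by
  set S : Set (Option (Fin n)) := {v | v = none ∨ ∃ i : Fin n, v = some i ∧ i < i₀}
  have hnone : none ∈ S := Or.inl rfl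
  have hbS : ∀ j ≤ i₀, b j ∈ supported K S := fun j hj =>
    mem_supported.mpr fun v hv =>
      (hb j v hv).imp_right fun ⟨i, hvi, hij⟩ => ⟨i, hvi, hij.trans_le hj⟩
  have hDS : ∀ p ∈ supported K S, D p ∈ supported K S := by
    refine fun p => derivation_mem_supported D fun s hs => ?_
    obtain rfl | ⟨j, rfl, hj⟩ := hs
    · rw [hDx]
      exact one_mem _
    · rw [hDy]
      exact add_mem (mul_mem (aeval_X_mem_supported hnone _)
        (X_mem_supported.mpr (Or.inr ⟨j, rfl, hj⟩))) (hbS j hj.le)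
  exact not_finite_span_range_pow_apply_X D hDS hnone (by simp [S]) hDx (hDy i₀)
    (hbS i₀ le_rfl) ha

/-- For the triangular derivation `D = ∂x + Σⱼ (aⱼ(x) yⱼ + bⱼ(x, y₁,…,y_{j-1})) ∂yⱼ`,
if `deg a_{i₀} ≥ 1` then the span of `{Dⁱ(y_{i₀}) : i ≥ 1}` is infinite-dimensional;
in particular `D` is not locally finite. -/
theorem stmt12 {K : Type*} [Field K] [CharZero K] (n : ℕ)
    (a : Fin n → Polynomial K) (b : Fin n → MvPolynomial (Option (Fin n)) K)
    (hb : ∀ j : Fin n, ∀ v ∈ (b j).vars, v = none ∨ ∃ i : Fin n, v = some i ∧ i < j)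
    (D : Derivation K (MvPolynomial (Option (Fin n)) K) (MvPolynomial (Option (Fin n)) K))
    (hDx : D (MvPolynomial.X none) = 1)
    (hDy : ∀ j : Fin n, D (MvPolynomial.X (some j)) =
      Polynomial.aeval (MvPolynomial.X (none : Option (Fin n))) (a j) * MvPolynomial.X (some j)
        + b j)
    (i₀ : Fin n) (ha : 1 ≤ (a i₀).natDegree) :
    ¬ FiniteDimensional K
        ↥(Submodule.span K
          (Set.range fun i : ℕ => (D.toLinearMap ^ (i + 1)) (MvPolynomial.X (some i₀)))) :=
  stmt12_general n a b hb D hDx hDy i₀ ha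
end

section
/- Let K be a field of characteristic zero and let D = ∂_x + Σⱼ₌₁ⁿ (aⱼ(x)yⱼ + bⱼ(x)) ∂_{yⱼ} be a derivation of R = K[x, y₁, …, y_n]. Assume the equation Σⱼ γⱼ aⱼ(x) = 0 has no nonzero solution (γ₁, …, γₙ) ∈ ℕⁿ, and deg a₁(x) ≥ 1. Then y₁ ∉ D(R), i.e., there is no f ∈ R with D(f) = y₁. -/
/-!
Identify `K[x, y₁, …, yₙ]` with `K[x][y₁, …, yₙ]`. If `y^m` is a monomial of `f` of maximal
degree in `y`, with coefficient `c ≠ 0`, the `y^m`-coefficient of `D f` is `c' + (Σ mⱼ aⱼ) c`: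
the terms `bⱼ ∂_{yⱼ}` only reach `y^m` from monomials of higher degree. As `deg c' < deg c`,
this is nonzero when `Σ mⱼ aⱼ ≠ 0`, and it is not `1` when `deg (Σ mⱼ aⱼ) ≥ 1`. So if `f` has
degree at least `2` in `y`, its top monomial survives in `D f = y₁`; otherwise comparing
`y₁`-coefficients gives `c' + a₁ c = 1`.
-/

open MvPolynomial

namespace Polynomial

variable {R : Type*} [Semiring R] [NoZeroDivisors R] {s c : R[X]}

theorem degree_derivative_add_mul (hs : s ≠ 0) (hc : c ≠ 0) :
    (derivative c + s * c).degree = (s * c).degree := by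
  refine degree_add_eq_right_of_degree_lt ((degree_derivative_lt hc).trans_le ?_)
  rw [degree_mul]
  exact le_add_of_nonneg_left (zero_le_degree_iff.mpr hs)

theorem derivative_add_mul_ne_zero (hs : s ≠ 0) (hc : c ≠ 0) : derivative c + s * c ≠ 0 := by
  rw [Ne, ← degree_eq_bot, degree_derivative_add_mul hs hc, degree_eq_bot]
  exact mul_ne_zero hs hc

theorem derivative_add_mul_ne_one (hs : 1 ≤ s.natDegree) : derivative c + s * c ≠ 1 := by
  have hs0 : s ≠ 0 := ne_zero_of_natDegree_gt hs
  intro h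
  obtain rfl | hc := eq_or_ne c 0
  · exact hs0 (by simpa using congrArg (s * ·) h.symm)
  have := natDegree_eq_of_degree_eq (degree_derivative_add_mul hs0 hc)
  rw [h, natDegree_one, natDegree_mul hs0 hc] at this
  omega

end Polynomial

namespace MvPolynomial

variable {R σ : Type*} [CommSemiring R]

theorem exists_mem_support_degree_eq_totalDegree {p : MvPolynomial σ R} (hp : p ≠ 0) :
    ∃ m ∈ p.support, m.degree = p.totalDegree :=
  (Finset.exists_mem_eq_sup _ (support_nonempty.mpr hp) _).imp fun _ ⟨hm, h⟩ => ⟨hm, h.symm⟩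

theorem coeff_add_single_eq_zero_of_totalDegree_le {p : MvPolynomial σ R} {m : σ →₀ ℕ}
    (hm : p.totalDegree ≤ m.degree) (j : σ) : coeff (m + Finsupp.single j 1) p = 0 := by
  refine coeff_eq_zero_of_totalDegree_lt ?_
  change _ < Finsupp.degree _
  rw [map_add, Finsupp.degree_single]
  omega

theorem _root_.Derivation.apply_eq_sum_mul_pderiv [Fintype σ]
    (D : Derivation R (MvPolynomial σ R) (MvPolynomial σ R)) (p : MvPolynomial σ R) :
    D p = ∑ i, D (X i) * pderiv i p := by
  classical
  have hD : D = ∑ i, D (X i) • pderiv i := derivation_ext fun i => by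
    change D (X i) = Derivation.coeFnAddMonoidHom (∑ j, D (X j) • pderiv j) (X i)
    simp [map_sum, Derivation.coeFnAddMonoidHom_apply, pderiv_X, Pi.single_apply]
  conv_lhs => rw [hD]
  change Derivation.coeFnAddMonoidHom (∑ j, D (X j) • pderiv j) p = _
  simp [map_sum, Derivation.coeFnAddMonoidHom_apply]

theorem coeff_X_mul_pderiv (p : MvPolynomial σ R) (i : σ) (m : σ →₀ ℕ) :
    coeff m (X i * pderiv i p) = m i * coeff m p := by
  classical
  rw [coeff_X_mul']
  split_ifs with hi
  · have hmi : 1 ≤ m i := Nat.one_le_iff_ne_zero.mpr (Finsupp.mem_support_iff.mp hi)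
    rw [coeff_pderiv, tsub_add_cancel_of_le (Finsupp.single_le_iff.mpr hmi), Finsupp.tsub_apply,
      Finsupp.single_eq_same, ← Nat.cast_add_one, Nat.sub_add_cancel hmi, mul_comm]
  · simp [Finsupp.notMem_support_iff.mp hi]

theorem optionEquivRight_aeval_X_none (q : Polynomial R) :
    optionEquivRight R σ (Polynomial.aeval (X none) q) = C q := by
  rw [← AlgEquiv.coe_toAlgHom, ← Polynomial.aeval_algHom_apply, AlgEquiv.coe_toAlgHom,
    optionEquivRight_X_none, ← algebraMap_eq, Polynomial.aeval_algebraMap_apply,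
    Polynomial.aeval_X_left_apply]

theorem optionEquivRight_pderiv_some (p : MvPolynomial (Option σ) R) (j : σ) :
    optionEquivRight R σ (pderiv (some j) p) = pderiv j (optionEquivRight R σ p) := by
  classical
  induction p using MvPolynomial.induction_on with
  | C r => simp only [optionEquivRight_C, pderiv_C, map_zero]
  | add p q hp hq => simp only [map_add, hp, hq]
  | mul_X p i hp =>
    cases i <;> simp only [Derivation.leibniz, map_add, map_mul, smul_eq_mul, hp,
      optionEquivRight_X_none, optionEquivRight_X_some, pderiv_X, pderiv_C, Pi.single_apply,
      Option.some.injEq, reduceCtorEq, if_false, apply_ite (optionEquivRight R σ), map_one,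
      map_zero]

theorem coeff_optionEquivRight_pderiv_none (p : MvPolynomial (Option σ) R) (m : σ →₀ ℕ) :
    coeff m (optionEquivRight R σ (pderiv none p)) =
      Polynomial.derivative (coeff m (optionEquivRight R σ p)) := by
  classical
  induction p using MvPolynomial.induction_on generalizing m with
  | C r =>
    rw [pderiv_C, map_zero, coeff_zero, optionEquivRight_C, coeff_C]
    split_ifs <;> simp
  | add p q hp hq => simp only [map_add, coeff_add, hp, hq]
  | mul_X p i hp =>
    simp only [Derivation.leibniz, pderiv_X, smul_eq_mul, map_add, map_mul, coeff_add]
    cases i with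
    | none =>
      simp only [Pi.single_eq_same, map_one, mul_one, optionEquivRight_X_none, mul_comm _ (C _),
        coeff_C_mul, hp, Polynomial.derivative_mul, Polynomial.derivative_X]
      ring
    | some i =>
      simp only [Pi.single_apply, reduceCtorEq, if_false, map_zero, mul_zero, coeff_zero, zero_add,
        optionEquivRight_X_some, coeff_mul_X', coeff_X_mul', hp, apply_ite Polynomial.derivative]

theorem coeff_optionEquivRight_derivation [Fintype σ]
    (D : Derivation R (MvPolynomial (Option σ) R) (MvPolynomial (Option σ) R))
    (a b : σ → Polynomial R) (hDx : D (X none) = 1)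
    (hDy : ∀ j, D (X (some j)) =
      Polynomial.aeval (X none) (a j) * X (some j) + Polynomial.aeval (X none) (b j))
    (p : MvPolynomial (Option σ) R) (m : σ →₀ ℕ) :
    coeff m (optionEquivRight R σ (D p)) =
      Polynomial.derivative (coeff m (optionEquivRight R σ p))
        + (∑ j, (m j : Polynomial R) * a j) * coeff m (optionEquivRight R σ p)
        + ∑ j, ((m j : Polynomial R) + 1) * b j
            * coeff (m + Finsupp.single j 1) (optionEquivRight R σ p) := by
  rw [D.apply_eq_sum_mul_pderiv, Fintype.sum_option, hDx, one_mul, map_add, coeff_add,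
    coeff_optionEquivRight_pderiv_none, add_assoc, Finset.sum_mul, ← Finset.sum_add_distrib]
  simp only [hDy, map_sum, map_add, map_mul, optionEquivRight_aeval_X_none,
    optionEquivRight_X_some, optionEquivRight_pderiv_some, coeff_sum, add_mul, coeff_add,
    mul_assoc, coeff_C_mul, coeff_X_mul_pderiv, coeff_pderiv]
  exact congrArg _ (Finset.sum_congr rfl fun j _ => by ring)

end MvPolynomial

theorem stmt13_general {K : Type*} [Field K] (n : ℕ) (hn : 0 < n)
    (a b : Fin n → Polynomial K)
    (D : Derivation K (MvPolynomial (Option (Fin n)) K) (MvPolynomial (Option (Fin n)) K))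
    (hDx : D (MvPolynomial.X none) = 1)
    (hDy : ∀ j : Fin n, D (MvPolynomial.X (some j)) =
      Polynomial.aeval (MvPolynomial.X (none : Option (Fin n))) (a j) * MvPolynomial.X (some j)
        + Polynomial.aeval (MvPolynomial.X (none : Option (Fin n))) (b j))
    (hγ : ∀ γ : Fin n → ℕ, (∑ j : Fin n, (γ j : Polynomial K) * a j) = 0 → γ = 0)
    (ha : 1 ≤ (a ⟨0, hn⟩).natDegree) :
    ¬ ∃ f : MvPolynomial (Option (Fin n)) K, D f = MvPolynomial.X (some ⟨0, hn⟩) := by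
  rintro ⟨f, hf⟩
  set j₀ : Fin n := ⟨0, hn⟩
  obtain ⟨F, hF⟩ : ∃ F, optionEquivRight K (Fin n) f = F := ⟨_, rfl⟩
  have coeff_X_j₀ (m : Fin n →₀ ℕ) (hm : F.totalDegree ≤ m.degree) :
      coeff m (X j₀ : MvPolynomial (Fin n) (Polynomial K)) =
        Polynomial.derivative (coeff m F) + (∑ j, (m j : Polynomial K) * a j) * coeff m F := by
    rw [← optionEquivRight_X_some, ← hf, coeff_optionEquivRight_derivation D a b hDx hDy, hF]
    simp only [coeff_add_single_eq_zero_of_totalDegree_le hm, mul_zero, Finset.sum_const_zero,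
      add_zero]
  by_cases hdeg : F.totalDegree ≤ 1
  · have h := coeff_X_j₀ (Finsupp.single j₀ 1) (by simpa using hdeg)
    rw [coeff_X, if_pos rfl] at h
    exact Polynomial.derivative_add_mul_ne_one ha (by simpa [Finsupp.single_apply] using h.symm)
  · obtain ⟨m, hm, hmdeg⟩ := exists_mem_support_degree_eq_totalDegree
      (p := F) (by rintro rfl; simp at hdeg)
    have hs : ∑ j, (m j : Polynomial K) * a j ≠ 0 := fun h0 => by
      rw [Finsupp.coe_eq_zero.mp (hγ m h0), map_zero] at hmdeg
      omega
    have h := coeff_X_j₀ m hmdeg.ge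
    rw [coeff_X, if_neg (by rintro rfl; simp at hmdeg; omega)] at h
    exact Polynomial.derivative_add_mul_ne_zero hs (mem_support_iff.mp hm) h.symm

/-- If `Σⱼ γⱼ aⱼ(x) = 0` has no nonzero solution `γ ∈ ℕⁿ` and `deg a₁ ≥ 1`, then
`y₁ ∉ Im D` for `D = ∂x + Σⱼ (aⱼ(x)yⱼ + bⱼ(x)) ∂yⱼ`. -/
theorem stmt13 {K : Type*} [Field K] [CharZero K] (n : ℕ) (hn : 0 < n)
    (a b : Fin n → Polynomial K)
    (D : Derivation K (MvPolynomial (Option (Fin n)) K) (MvPolynomial (Option (Fin n)) K))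
    (hDx : D (MvPolynomial.X none) = 1)
    (hDy : ∀ j : Fin n, D (MvPolynomial.X (some j)) =
      Polynomial.aeval (MvPolynomial.X (none : Option (Fin n))) (a j) * MvPolynomial.X (some j)
        + Polynomial.aeval (MvPolynomial.X (none : Option (Fin n))) (b j))
    (hγ : ∀ γ : Fin n → ℕ, (∑ j : Fin n, (γ j : Polynomial K) * a j) = 0 → γ = 0)
    (ha : 1 ≤ (a ⟨0, hn⟩).natDegree) :
    ¬ ∃ f : MvPolynomial (Option (Fin n)) K, D f = MvPolynomial.X (some ⟨0, hn⟩) :=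
  stmt13_general n hn a b D hDx hDy hγ ha
end
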